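/- Let d ≥ 3 and let z_1, …, z_d ∈ ℤ^d be a basis of ℤ^d such that z̲_2, …, z̲_d are linearly independent in ℝ^{d−1} and |z̲_1| ≤ |z̲_2| ≤ |z̲_3| with z̲_1 ≠ 0. Then for each α ∈ 𝔖_2 we have ⟨α, z_1⟩ · ⟨α_2, z_1⟩ > 0. -/

import Mathlib

open scoped InnerProductSpace

noncomputable section

/-- `ℝ^n` with the Euclidean structure. -/
abbrev E (n : ℕ) : Type := EuclideanSpace ℝ (Fin n)

/-- The projection `x ↦ x̲` forgetting the last coordinate. -/
def pr (d : ℕ) (x : E d) : E (d - 1) :=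
  WithLp.toLp 2 (fun i : Fin (d - 1) => x (Fin.castLE (Nat.sub_le d 1) i))

/-- The canonical embedding of `ℤ^d` into `ℝ^d`. -/
def toE (d : ℕ) (z : Fin d → ℤ) : E d := WithLp.toLp 2 (fun i => (z i : ℝ))

/-- The `m`-dimensional volume of the parallelepiped spanned by `v 0, …, v (m-1)`
(square root of the Gram determinant). -/
def gramVol {n m : ℕ} (v : Fin m → E n) : ℝ :=
  Real.sqrt ((Matrix.of (fun i j : Fin m => ⟪v i, v j⟫_ℝ)).det)

/-- `z` is a best approximation vector for the linear form `L_α : x ↦ ⟪α, x⟫`. -/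
def IsBestApprox (d : ℕ) (α : E d) (z : Fin d → ℤ) : Prop :=
  pr d (toE d z) ≠ 0 ∧
  ∀ z' : Fin d → ℤ, pr d (toE d z') ≠ 0 →
    (‖pr d (toE d z')‖ ≤ ‖pr d (toE d z)‖ → |⟪α, toE d z⟫_ℝ| ≤ |⟪α, toE d z'⟫_ℝ|) ∧
    (‖pr d (toE d z')‖ < ‖pr d (toE d z)‖ → |⟪α, toE d z⟫_ℝ| < |⟪α, toE d z'⟫_ℝ|)

/-- `det Λ̲_{k,l}` for a sequence of integer vectors: the `l`-dimensional volume of the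
parallelepiped spanned by `z̲_k, …, z̲_{k+l-1}`. -/
def detL (d : ℕ) (z : ℕ → Fin d → ℤ) (k l : ℕ) : ℝ :=
  gramVol (fun i : Fin l => pr d (toE d (z (k + i.1))))

/-- `D_{k,l} = det Λ̲_{k,l} / |z̲_k|^l`. -/
def Dq (d : ℕ) (z : ℕ → Fin d → ℤ) (k l : ℕ) : ℝ :=
  detL d z k l / ‖pr d (toE d (z k))‖ ^ l

/-- `B_k = |z̲_{k+1}| / |z̲_k|`. -/
def Bq (d : ℕ) (z : ℕ → Fin d → ℤ) (k : ℕ) : ℝ :=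
  ‖pr d (toE d (z (k + 1)))‖ / ‖pr d (toE d (z k))‖

/-- `R_k = 1 / (2 |z̲_{k+1}| det Λ̲_{k,d-1})`. -/
def Rq (d : ℕ) (z : ℕ → Fin d → ℤ) (k : ℕ) : ℝ :=
  1 / (2 * ‖pr d (toE d (z (k + 1)))‖ * detL d z k (d - 1))

/-- `v 0, …, v (d-1)` form a basis of the lattice `ℤ^d`. -/
def IsZBasis (d : ℕ) (v : Fin d → Fin d → ℤ) : Prop :=
  IsUnit ((Matrix.of (fun i j : Fin d => v j i)).det)

/-!
Put `c = ⟪α₂, z₁⟫`. Multiplying the unimodular matrix with columns `z₁, …, z_d` on the left by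
the identity with its last row replaced by `α₂` (a determinant-one operation, since the last
coordinate of `α₂` is `1`) turns that last row into `(c, 0, …, 0)`, because `α₂ ⟂ z₂, …, z_d`.
Expanding along it gives `|c| · det Λ̲_{2,d-1} = 1`. For `α ∈ 𝔖₂` the difference `α - α₂` has
last coordinate `0`, so `|⟪α, z₁⟫ - c| ≤ |α - α₂| |z̲₁| ≤ R₂ |z̲₃| ≤ 1 / (2 det Λ̲_{2,d-1}) = |c| / 2`,
and `⟪α, z₁⟫` has the sign of `c`.
-/

section

open Matrix

theorem det_eq_of_vecMul_eq_single {R : Type*} [CommRing R] {n : ℕ}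
    (A : Matrix (Fin (n + 1)) (Fin (n + 1)) R) (a : Fin (n + 1) → R) (ha : a (Fin.last n) = 1)
    (c : R) (hA : a ᵥ* A = Pi.single 0 c) :
    A.det = (-1) ^ n * c * (A.submatrix Fin.castSucc Fin.succ).det := by
  have hP : ((1 : Matrix (Fin (n + 1)) (Fin (n + 1)) R).updateRow (Fin.last n) a).det = 1 := by
    rw [det_of_isLowerTriangular _ ?_, Fin.prod_univ_castSucc]
    · simp [ha, Fin.castSucc_ne_last]
    · intro i j (hij : i < j)
      simp [(hij.trans_le (Fin.le_last j)).ne, one_apply_ne hij.ne]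
  calc A.det = ((1 : Matrix (Fin (n + 1)) (Fin (n + 1)) R).updateRow (Fin.last n) a * A).det := by
        rw [det_mul, hP, one_mul]
    _ = (A.updateRow (Fin.last n) (Pi.single 0 c)).det := by rw [updateRow_mul, one_mul, hA]
    _ = _ := by
        rw [det_succ_row _ (Fin.last n), Fin.sum_univ_succ]
        simp only [submatrix_updateRow_succAbove]
        simp

theorem gramVol_eq_abs_det {m : ℕ} (v : Fin m → E m) :
    gramVol v = |(of fun i j => v j i).det| := by
  have hgram : (of fun i j => ⟪v i, v j⟫_ℝ) =
      (of fun i j => v j i)ᵀ * of fun i j => v j i := by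
    ext i j
    simp [mul_apply, PiLp.inner_apply, mul_comm]
  rw [gramVol, hgram, det_mul, det_transpose, ← sq, Real.sqrt_sq_eq_abs]

theorem abs_det_eq_one_of_isZBasis {d : ℕ} {v : Fin d → Fin d → ℤ} (hv : IsZBasis d v) :
    |(of fun i j => (v j i : ℝ)).det| = 1 := by
  have hcast : (of fun i j => (v j i : ℝ)).det = ((of fun i j => v j i).det : ℝ) :=
    (RingHom.map_det (Int.castRingHom ℝ) _).symm
  rcases Int.isUnit_iff.mp hv with h | h <;> simp [hcast, h]

theorem inner_toE (d : ℕ) (x : E d) (z : Fin d → ℤ) : ⟪x, toE d z⟫_ℝ = ∑ i, x i * z i := by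
  simp [toE, PiLp.inner_apply, mul_comm]

theorem abs_inner_mul_detL_eq_one {n : ℕ} (z : ℕ → Fin (n + 1) → ℤ)
    (hbasis : IsZBasis (n + 1) (fun j => z (j.1 + 1)))
    (α : E (n + 1)) (hα : α (Fin.last n) = 1)
    (hperp : ∀ i : Fin n, ⟪α, toE (n + 1) (z (i.1 + 2))⟫_ℝ = 0) :
    |⟪α, toE (n + 1) (z 1)⟫_ℝ| * detL (n + 1) z 2 n = 1 := by
  set A : Matrix (Fin (n + 1)) (Fin (n + 1)) ℝ := of fun i j => (z (j.1 + 1) i : ℝ)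
  have hvec : ⇑α ᵥ* A = Pi.single 0 ⟪α, toE (n + 1) (z 1)⟫_ℝ := by
    ext j
    refine Fin.cases ?_ (fun j => ?_) j
    · simp [A, vecMul, dotProduct, inner_toE]
    · simp [A, vecMul, dotProduct, ← inner_toE, hperp]
  have hminor : detL (n + 1) z 2 n = |(A.submatrix Fin.castSucc Fin.succ).det| := by
    rw [detL, gramVol_eq_abs_det]
    congr 3
    ext i j
    simp only [A, pr, toE, of_apply, Fin.val_succ]
    rw [add_comm 2, add_assoc]
    rfl
  rw [hminor, ← abs_mul, ← abs_det_eq_one_of_isZBasis hbasis,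
    det_eq_of_vecMul_eq_single A α hα _ hvec]
  simp [abs_mul]

end

theorem inner_eq_inner_pr_of_last_eq_zero {n : ℕ} (x y : E (n + 1)) (hx : x (Fin.last n) = 0) :
    ⟪x, y⟫_ℝ = ⟪pr (n + 1) x, pr (n + 1) y⟫_ℝ := by
  simp only [PiLp.inner_apply, Fin.sum_univ_castSucc, hx, inner_zero_left, add_zero]
  rfl

theorem norm_pr_le {n : ℕ} (x : E (n + 1)) : ‖pr (n + 1) x‖ ≤ ‖x‖ := by
  rw [EuclideanSpace.norm_eq, EuclideanSpace.norm_eq, Fin.sum_univ_castSucc]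
  exact Real.sqrt_le_sqrt (le_add_of_nonneg_right (sq_nonneg _))

theorem Rq_mul_norm_le (d : ℕ) (z : ℕ → Fin d → ℤ) (k : ℕ) :
    Rq d z k * ‖pr d (toE d (z (k + 1)))‖ ≤ 1 / (2 * detL d z k (d - 1)) := by
  have hL : 0 ≤ detL d z k (d - 1) := Real.sqrt_nonneg _
  set x := ‖pr d (toE d (z (k + 1)))‖
  calc Rq d z k * x = x / x * (1 / (2 * detL d z k (d - 1))) := by rw [Rq]; ring
    _ ≤ 1 / (2 * detL d z k (d - 1)) := mul_le_of_le_one_left (by positivity) (div_self_le_one x)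

theorem mul_pos_of_abs_sub_lt_abs {a c : ℝ} (h : |a - c| < |c|) : 0 < a * c := by
  have hsub : -(|a - c| * |c|) ≤ (a - c) * c := by rw [← abs_mul]; exact neg_abs_le _
  have hc : 0 < |c| := (abs_nonneg _).trans_lt h
  nlinarith [abs_mul_abs_self c]

theorem stmt7 (d : ℕ) (hd : 3 ≤ d) (z : ℕ → Fin d → ℤ)
    (hbasis : IsZBasis d (fun j => z (j.1 + 1)))
    (h12 : ‖pr d (toE d (z 1))‖ ≤ ‖pr d (toE d (z 2))‖)
    (h23 : ‖pr d (toE d (z 2))‖ ≤ ‖pr d (toE d (z 3))‖)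
    (α2 : E d) (hα2pi : α2 ⟨d - 1, by omega⟩ = 1)
    (hα2perp : ∀ i : Fin (d - 1), ⟪α2, toE d (z (i.1 + 2))⟫_ℝ = 0)
    (α : E d) (hαpi : α ⟨d - 1, by omega⟩ = 1) (hαS : ‖α - α2‖ ≤ Rq d z 2) :
    0 < ⟪α, toE d (z 1)⟫_ℝ * ⟪α2, toE d (z 1)⟫_ℝ := by
  obtain ⟨n, rfl⟩ : ∃ n, d = n + 1 := ⟨d - 1, by omega⟩
  set L := detL (n + 1) z 2 n
  have hkey : |⟪α2, toE (n + 1) (z 1)⟫_ℝ| * L = 1 :=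
    abs_inner_mul_detL_eq_one z hbasis α2 hα2pi hα2perp
  have hL : 0 < L := lt_of_le_of_ne (Real.sqrt_nonneg _) (by rintro h; simp [← h] at hkey)
  have hdiff : |⟪α, toE (n + 1) (z 1)⟫_ℝ - ⟪α2, toE (n + 1) (z 1)⟫_ℝ| ≤ 1 / (2 * L) := by
    have hlast : (α - α2) (Fin.last n) = 0 := by
      rw [PiLp.sub_apply]
      exact sub_eq_zero.mpr (hαpi.trans hα2pi.symm)
    rw [← inner_sub_left, inner_eq_inner_pr_of_last_eq_zero _ _ hlast]
    calc _ ≤ ‖α - α2‖ * ‖pr (n + 1) (toE (n + 1) (z 1))‖ :=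
          (abs_real_inner_le_norm _ _).trans (by gcongr; exact norm_pr_le _)
      _ ≤ Rq (n + 1) z 2 * ‖pr (n + 1) (toE (n + 1) (z 3))‖ :=
          mul_le_mul hαS (h12.trans h23) (norm_nonneg _) ((norm_nonneg _).trans hαS)
      _ ≤ 1 / (2 * L) := Rq_mul_norm_le (n + 1) z 2
  refine mul_pos_of_abs_sub_lt_abs (hdiff.trans_lt ?_)
  rw [eq_div_of_mul_eq hL.ne' hkey]
  exact one_div_lt_one_div_of_lt hL (by linarith)
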